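/- Let B be an H-module algebra and let 1_A ∈ B be an idempotent such that the right ideal A = 1_A·B is a unital algebra with unity 1_A. Then the map h · a := 1_A (h ⊳ a), for h ∈ H and a ∈ A, defines a partial action of H on A (the induced partial action), i.e., A is a partial H-module algebra. -/

import Mathlib

/-!
Since `1_A` is a right unit on `A = 1_A B`, `(1_A x)(1_A y) = (1_A x) y = 1_A (x y)` for all
`x y ∈ B`. Hence applying `1_A ·` to `h ⊳ (x y) = ∑ (h₁ ⊳ x)(h₂ ⊳ y)` shows that the induced map
satisfies axiom (1) for arbitrary `x y ∈ B`, not only on `A`. Axiom (3) is the case `x = 1_A`,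
`y = g ⊳ a`, together with `h₂ ⊳ (g ⊳ a) = (h₂ g) ⊳ a`; axiom (2) is `1_H ⊳ a = a` and `1_A a = a`.
-/

open TensorProduct

/-- The axioms of a (possibly non-unital) left `H`-module algebra. -/
structure IsModuleAlgebra (k : Type*) [Field k] (H B : Type*) [Ring H] [HopfAlgebra k H]
    [NonUnitalRing B] [Module k B] [SMulCommClass k B B] [IsScalarTower k B B]
    (act : H →ₗ[k] B →ₗ[k] B) : Prop where
  one_act : ∀ b : B, act 1 b = b
  mul_act : ∀ (g h : H) (b : B), act (g * h) b = act g (act h b)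
  act_mul : ∀ (h : H) (x y : B) {ι : Type*} (r : Coalgebra.Repr k h ι),
    act h (x * y) = ∑ i ∈ r.index, act (r.left i) x * act (r.right i) y

noncomputable section

variable (k : Type*) [Field k] (H B : Type*) [Ring H] [HopfAlgebra k H]
  [NonUnitalRing B] [Module k B] [SMulCommClass k B B] [IsScalarTower k B B]

/-- The induced partial action `h · b := 1_A (h ⊳ b)` (as a bilinear map on all of `B`;
it is then restricted to the right ideal `A = 1_A B`). -/
def inducedPact (act : H →ₗ[k] B →ₗ[k] B) (oneA : B) : H →ₗ[k] B →ₗ[k] B where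
  toFun h := LinearMap.mulLeft k oneA ∘ₗ act h
  map_add' := by intro h₁ h₂; ext b; simp [mul_add]
  map_smul' := by intro c h; ext b; simp

universe w

theorem Finset.sum_ulift_equivFin {ι M : Type*} [AddCommMonoid M] (s : Finset ι) (g : ι → M) :
    ∑ i : ULift.{w} (Fin s.card), g (s.equivFin.symm i.down) = ∑ i ∈ s, g i := by
  rw [← Finset.sum_coe_sort s g]
  exact Fintype.sum_equiv (Equiv.ulift.trans s.equivFin.symm) _ _ fun _ => rfl

def Coalgebra.Repr.uliftFin {R A : Type*} [CommSemiring R] [AddCommMonoid A] [Module R A]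
    [CoalgebraStruct R A] {a : A} {ι : Type*} (r : Coalgebra.Repr R a ι) :
    Coalgebra.Repr R a (ULift.{w} (Fin r.index.card)) where
  index := Finset.univ
  left i := r.left (r.index.equivFin.symm i.down)
  right i := r.right (r.index.equivFin.symm i.down)
  eq := (r.index.sum_ulift_equivFin fun i => r.left i ⊗ₜ[R] r.right i).trans r.eq

theorem mul_mul_mul_of_right_unit {M : Type*} [Semigroup M] {e : M}
    (he : ∀ a : M, (∃ b : M, a = e * b) → a * e = a) (x y : M) : e * x * (e * y) = e * (x * y) := by
  rw [← mul_assoc, he _ ⟨x, rfl⟩, mul_assoc]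

section

variable {k H B}

/-- The field `act_mul` fixes the universe of the index type; reindexing through
`Coalgebra.Repr.uliftFin` removes that restriction. -/
theorem IsModuleAlgebra.act_mul_of_repr {act : H →ₗ[k] B →ₗ[k] B}
    (hB : IsModuleAlgebra k H B act) (h : H) (x y : B) {ι : Type*}
    (r : Coalgebra.Repr k h ι) :
    act h (x * y) = ∑ i ∈ r.index, act (r.left i) x * act (r.right i) y :=
  (hB.act_mul h x y r.uliftFin).trans
    (r.index.sum_ulift_equivFin fun i => act (r.left i) x * act (r.right i) y)

variable {act : H →ₗ[k] B →ₗ[k] B} {oneA : B}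

theorem inducedPact_mul (hB : IsModuleAlgebra k H B act)
    (hunitr : ∀ a : B, (∃ b : B, a = oneA * b) → a * oneA = a) (h : H) (x y : B) {ι : Type*}
    (r : Coalgebra.Repr k h ι) :
    inducedPact k H B act oneA h (x * y) =
      ∑ i ∈ r.index, inducedPact k H B act oneA (r.left i) x *
        inducedPact k H B act oneA (r.right i) y := by
  change oneA * act h (x * y) = ∑ i ∈ r.index, oneA * act _ x * (oneA * act _ y)
  simp only [hB.act_mul_of_repr h x y r, Finset.mul_sum, mul_mul_mul_of_right_unit hunitr]

theorem inducedPact_act (hB : IsModuleAlgebra k H B act) (h g : H) (b : B) :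
    inducedPact k H B act oneA h (act g b) = inducedPact k H B act oneA (h * g) b := by
  change oneA * act h (act g b) = oneA * act (h * g) b
  rw [hB.mul_act]

end

theorem induced_partial_action (act : H →ₗ[k] B →ₗ[k] B)
    (hB : IsModuleAlgebra k H B act) (oneA : B)
    -- `A = 1_A B` is a unital algebra with unity `1_A`:
    (hunitl : ∀ a : B, (∃ b : B, a = oneA * b) → oneA * a = a)
    (hunitr : ∀ a : B, (∃ b : B, a = oneA * b) → a * oneA = a) :
    -- the induced map takes `A` into `A`
    (∀ (h : H) (a : B), (∃ b : B, a = oneA * b) →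
      ∃ b : B, inducedPact k H B act oneA h a = oneA * b) ∧
    -- axiom (2):  `1_H · a = a`
    (∀ a : B, (∃ b : B, a = oneA * b) → inducedPact k H B act oneA 1 a = a) ∧
    -- axiom (1):  `h · (a a') = ∑ (h₁ · a)(h₂ · a')`
    (∀ (h : H) (a a' : B), (∃ b : B, a = oneA * b) → (∃ b : B, a' = oneA * b) →
      ∀ {ι : Type*} (r : Coalgebra.Repr k h ι),
        inducedPact k H B act oneA h (a * a') =
          ∑ i ∈ r.index,
            inducedPact k H B act oneA (r.left i) a *
              inducedPact k H B act oneA (r.right i) a') ∧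
    -- axiom (3):  `h · (g · a) = ∑ (h₁ · 1_A)((h₂ g) · a)`
    (∀ (h g : H) (a : B), (∃ b : B, a = oneA * b) →
      ∀ {ι : Type*} (r : Coalgebra.Repr k h ι),
        inducedPact k H B act oneA h (inducedPact k H B act oneA g a) =
          ∑ i ∈ r.index,
            inducedPact k H B act oneA (r.left i) oneA *
              inducedPact k H B act oneA (r.right i * g) a) := by
  refine ⟨fun h a _ => ⟨act h a, rfl⟩, fun a ha => ?_,
    fun h a a' _ _ _ r => inducedPact_mul hB hunitr h a a' r, fun h g a _ _ r => ?_⟩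
  · change oneA * act 1 a = a
    rw [hB.one_act, hunitl a ha]
  · change inducedPact k H B act oneA h (oneA * act g a) = _
    rw [inducedPact_mul hB hunitr h oneA _ r]
    simp only [inducedPact_act hB]

end
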